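/- Let T ∈ (0,∞] and let p : ℝ × [0,T) → ℝ be smooth, 2π-periodic in θ, solving the length-preserving inverse curvature flow ∂p/∂t = ∂²p/∂θ² + p − L(t)/(2π), where L(t) = ∫₀^{2π} p(θ,t) dθ and β = p + ∂²p/∂θ². Then L(t) = L(0) for all t ∈ [0,T), and the algebraic area A(t) = (1/2)∫₀^{2π} p(θ,t)β(θ,t) dθ is non-decreasing in t; indeed dA/dt = ∫₀^{2π} β(θ,t)² dθ − L(t)²/(2π) ≥ 0. -/

import Mathlib

/-
Differentiating under the integral sign, `L' = ∫ ∂ₜp = ∫ (p'' + p) - L = 0`, because `p''`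
integrates to zero over a period. Integrating by parts, `A = ½ ∫ (p² - p'²)`; by Schwarz's
theorem and another integration by parts, `A' = ∫ (p ∂ₜp - p' ∂_θ∂ₜp) = ∫ β ∂ₜp
= ∫ β (β - L/(2π)) = ∫ β² - L²/(2π)`, which is nonnegative by Cauchy–Schwarz since
`∫ β = L`. Differentiation under the integral sign needs an open time interval; at `t = 0`
the one-sided derivative exists because the interior derivative extends continuously to the
endpoint.
-/

open Real Filter
open scoped ENNReal

/-- The curvature quantity `β = p + p''` of an ℓ-convex Legendre curve (ℓ = 1)
with support function `p`. -/
noncomputable def betaF (p : ℝ → ℝ) : ℝ → ℝ := fun θ => p θ + iteratedDeriv 2 p θ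

/-- The algebraic length `L = ∫₀^{2π} p`. -/
noncomputable def algLen (p : ℝ → ℝ) : ℝ := ∫ θ in (0:ℝ)..(2 * π), p θ

/-- The algebraic area `A = (1/2) ∫₀^{2π} p β`. -/
noncomputable def algArea (p : ℝ → ℝ) : ℝ :=
  (1 / 2) * ∫ θ in (0:ℝ)..(2 * π), p θ * betaF p θ

/-- The time interval `[0, T)` for `T ∈ (0, ∞]`, as a subset of ℝ. -/
def timeDom (T : ℝ≥0∞) : Set ℝ := {t : ℝ | 0 ≤ t ∧ ENNReal.ofReal t < T}

open Set Function Topology MeasureTheory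

theorem Function.Periodic.deriv {𝕜 F : Type*} [NontriviallyNormedField 𝕜]
    [NormedAddCommGroup F] [NormedSpace 𝕜 F] {f : 𝕜 → F} {c : 𝕜} (h : Periodic f c) :
    Periodic (deriv f) c :=
  fun x => by rw [← deriv_comp_add_const, h.funext]

section PeriodicCalculus

variable {f u v : ℝ → ℝ} {c : ℝ}

theorem integral_deriv_eq_zero_of_periodic (hf : ContDiff ℝ 1 f) (h : Periodic f c) :
    ∫ x in 0..c, deriv f x = 0 := by
  rw [intervalIntegral.integral_deriv_eq_sub (fun x _ => hf.differentiable one_ne_zero x)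
    ((hf.continuous_deriv le_rfl).intervalIntegrable _ _), sub_eq_zero]
  simpa using h 0

theorem integral_mul_deriv_eq_neg_of_periodic (hu : ContDiff ℝ 1 u) (hv : ContDiff ℝ 1 v)
    (hu_per : Periodic u c) (hv_per : Periodic v c) :
    ∫ x in 0..c, u x * deriv v x = -∫ x in 0..c, deriv u x * v x := by
  rw [intervalIntegral.integral_mul_deriv_eq_deriv_mul
    (fun x _ => (hu.differentiable one_ne_zero x).hasDerivAt)
    (fun x _ => (hv.differentiable one_ne_zero x).hasDerivAt)
    ((hu.continuous_deriv le_rfl).intervalIntegrable _ _)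
    ((hv.continuous_deriv le_rfl).intervalIntegrable _ _)]
  have hu_c : u c = u 0 := by simpa using hu_per 0
  have hv_c : v c = v 0 := by simpa using hv_per 0
  rw [hu_c, hv_c, sub_self, zero_sub]

end PeriodicCalculus

theorem sq_intervalIntegral_div_le_intervalIntegral_sq {g : ℝ → ℝ} {a b : ℝ}
    (hg : Continuous g) (hab : a < b) :
    (∫ x in a..b, g x) ^ 2 / (b - a) ≤ ∫ x in a..b, g x ^ 2 := by
  set m := (∫ x in a..b, g x) / (b - a)
  have hba : b - a ≠ 0 := (sub_pos.2 hab).ne'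
  have hexpand : ∫ x in a..b, (g x - m) ^ 2
      = (∫ x in a..b, g x ^ 2) - (∫ x in a..b, g x) ^ 2 / (b - a) := by
    have hsq : ∀ x, (g x - m) ^ 2 = g x ^ 2 - 2 * m * g x + m ^ 2 := fun x => by ring
    simp_rw [hsq]
    have hint {h : ℝ → ℝ} (hh : Continuous h) : IntervalIntegrable h volume a b :=
      hh.intervalIntegrable a b
    rw [intervalIntegral.integral_add (hint (by fun_prop)) intervalIntegrable_const,
      intervalIntegral.integral_sub (hint (by fun_prop)) (hint (by fun_prop)),
      intervalIntegral.integral_const_mul, intervalIntegral.integral_const, smul_eq_mul]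
    simp only [m]
    field_simp
    ring
  have hnonneg : 0 ≤ ∫ x in a..b, (g x - m) ^ 2 :=
    intervalIntegral.integral_nonneg hab.le fun x _ => sq_nonneg (g x - m)
  linarith

theorem iteratedDeriv_two_eq_deriv_deriv (f : ℝ → ℝ) :
    iteratedDeriv 2 f = deriv (deriv f) := by
  rw [iteratedDeriv_succ, iteratedDeriv_one]

theorem betaF_eq_add_deriv_deriv (f : ℝ → ℝ) (θ : ℝ) :
    betaF f θ = f θ + deriv (deriv f) θ := by
  rw [betaF, iteratedDeriv_two_eq_deriv_deriv]

/-- The right-hand side `β - λ` of the flow equation `∂ₜp = p'' + p - λ`, `λ = L/(2π)`. -/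
noncomputable def flowSpeed (f : ℝ → ℝ) (θ : ℝ) : ℝ := betaF f θ - algLen f / (2 * π)

section SupportFunction

variable {f : ℝ → ℝ}

theorem ContDiff.continuous_betaF (hf : ContDiff ℝ 2 f) : Continuous (betaF f) :=
  hf.continuous.add (hf.continuous_iteratedDeriv 2 le_rfl)

theorem integral_betaF (hf : ContDiff ℝ 2 f) (hper : Periodic f (2 * π)) :
    ∫ θ in 0..2 * π, betaF f θ = algLen f := by
  simp only [betaF_eq_add_deriv_deriv]
  rw [intervalIntegral.integral_add (hf.continuous.intervalIntegrable _ _)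
    ((hf.deriv'.continuous_deriv le_rfl).intervalIntegrable _ _),
    integral_deriv_eq_zero_of_periodic (hf.deriv' : ContDiff ℝ 1 (deriv f)) hper.deriv, add_zero,
    algLen]

theorem algArea_eq_integral_sq_sub_sq_deriv (hf : ContDiff ℝ 2 f) (hper : Periodic f (2 * π)) :
    algArea f = 1 / 2 * ∫ θ in 0..2 * π, (f θ ^ 2 - deriv f θ ^ 2) := by
  have hf' : ContDiff ℝ 1 (deriv f) := hf.deriv'
  have hint {g : ℝ → ℝ} (hg : Continuous g) : IntervalIntegrable g volume 0 (2 * π) :=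
    hg.intervalIntegrable _ _
  have hc0 := hf.continuous
  have hc1 := hf'.continuous
  have hc2 := hf'.continuous_deriv le_rfl
  have hibp :
      ∫ θ in 0..2 * π, f θ * deriv (deriv f) θ = -∫ θ in 0..2 * π, deriv f θ ^ 2 := by
    simp only [sq]
    exact integral_mul_deriv_eq_neg_of_periodic (hf.of_le one_le_two) hf' hper hper.deriv
  simp only [algArea, betaF_eq_add_deriv_deriv, mul_add, ← sq]
  rw [intervalIntegral.integral_add (hint (by fun_prop)) (hint (by fun_prop)), hibp,
    intervalIntegral.integral_sub (hint (by fun_prop)) (hint (by fun_prop)), sub_eq_add_neg]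

theorem sq_algLen_div_le_integral_sq_betaF (hf : ContDiff ℝ 2 f) (hper : Periodic f (2 * π)) :
    algLen f ^ 2 / (2 * π) ≤ ∫ θ in 0..2 * π, betaF f θ ^ 2 := by
  have h := sq_intervalIntegral_div_le_intervalIntegral_sq hf.continuous_betaF two_pi_pos
  rwa [integral_betaF hf hper, sub_zero] at h

theorem integral_flowSpeed (hf : ContDiff ℝ 2 f) (hper : Periodic f (2 * π)) :
    ∫ θ in 0..2 * π, flowSpeed f θ = 0 := by
  simp only [flowSpeed]
  rw [intervalIntegral.integral_sub (hf.continuous_betaF.intervalIntegrable _ _)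
    intervalIntegrable_const, integral_betaF hf hper, intervalIntegral.integral_const, smul_eq_mul]
  field_simp
  ring

theorem contDiff_flowSpeed (hf : ContDiff ℝ 3 f) : ContDiff ℝ 1 (flowSpeed f) := by
  have h : flowSpeed f = fun θ => f θ + deriv (deriv f) θ - algLen f / (2 * π) :=
    funext fun θ => by rw [flowSpeed, betaF_eq_add_deriv_deriv]
  rw [h]
  exact ((hf.of_le (by norm_num)).add hf.deriv'.deriv').sub contDiff_const

theorem periodic_flowSpeed (hper : Periodic f (2 * π)) :
    Periodic (flowSpeed f) (2 * π) := fun θ => by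
  simp only [flowSpeed, betaF_eq_add_deriv_deriv, hper θ, hper.deriv.deriv θ]

theorem integral_mul_flowSpeed_sub_deriv_mul_deriv (hf : ContDiff ℝ 3 f)
    (hper : Periodic f (2 * π)) :
    ∫ θ in 0..2 * π, (f θ * flowSpeed f θ - deriv f θ * deriv (flowSpeed f) θ)
      = (∫ θ in 0..2 * π, betaF f θ ^ 2) - algLen f ^ 2 / (2 * π) := by
  have hf2 : ContDiff ℝ 2 f := hf.of_le (by norm_num)
  have hf' : ContDiff ℝ 2 (deriv f) := hf.deriv'
  have hv := contDiff_flowSpeed hf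
  have hint {g : ℝ → ℝ} (hg : Continuous g) : IntervalIntegrable g volume 0 (2 * π) :=
    hg.intervalIntegrable _ _
  have hc0 := hf.continuous
  have hc1 := hf'.continuous
  have hc2 := hf'.continuous_deriv one_le_two
  have hcβ := hf2.continuous_betaF
  have hcv := hv.continuous
  have hcv' := hv.continuous_deriv le_rfl
  have hβv (θ : ℝ) : f θ * flowSpeed f θ + deriv (deriv f) θ * flowSpeed f θ
      = betaF f θ ^ 2 - algLen f / (2 * π) * betaF f θ := by
    rw [flowSpeed, betaF_eq_add_deriv_deriv]
    ring
  rw [intervalIntegral.integral_sub (hint (by fun_prop)) (hint (by fun_prop)),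
    integral_mul_deriv_eq_neg_of_periodic (hf'.of_le one_le_two) hv hper.deriv
      (periodic_flowSpeed hper),
    sub_neg_eq_add, ← intervalIntegral.integral_add (hint (by fun_prop)) (hint (by fun_prop))]
  simp only [hβv]
  rw [intervalIntegral.integral_sub (hint (by fun_prop)) (hint (by fun_prop)),
    intervalIntegral.integral_const_mul, integral_betaF hf2 hper]
  ring

end SupportFunction

section Slices

variable {p : ℝ → ℝ → ℝ} {D : Set ℝ} {t θ : ℝ} {f' : ℝ × ℝ →L[ℝ] ℝ}
  {m n : WithTop ℕ∞}

theorem HasFDerivWithinAt.hasDerivWithinAt_uncurry_left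
    (h : HasFDerivWithinAt (uncurry p) f' (D ×ˢ univ) (t, θ)) :
    HasDerivWithinAt (p · θ) (f' (1, 0)) D t :=
  show HasDerivWithinAt (uncurry p ∘ fun s => (s, θ)) _ D t from
    h.comp_hasDerivWithinAt t ((hasDerivAt_id' t).prodMk (hasDerivAt_const t θ)).hasDerivWithinAt
      fun _ hs => mk_mem_prod hs (mem_univ θ)

theorem HasFDerivWithinAt.hasDerivAt_uncurry_right
    (h : HasFDerivWithinAt (uncurry p) f' (D ×ˢ univ) (t, θ)) (ht : t ∈ D) :
    HasDerivAt (p t) (f' (0, 1)) θ := by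
  rw [← hasDerivWithinAt_univ]
  exact h.comp_hasDerivWithinAt θ
    ((hasDerivAt_const θ t).prodMk (hasDerivAt_id' θ)).hasDerivWithinAt
      fun φ _ => mk_mem_prod ht (mem_univ φ)

theorem HasFDerivAt.hasDerivAt_uncurry_left (h : HasFDerivAt (uncurry p) f' (t, θ)) :
    HasDerivAt (p · θ) (f' (1, 0)) t := by
  rw [← hasDerivWithinAt_univ]
  exact (h.hasFDerivWithinAt (s := univ ×ˢ univ)).hasDerivWithinAt_uncurry_left

theorem HasFDerivAt.hasDerivAt_uncurry_right (h : HasFDerivAt (uncurry p) f' (t, θ)) :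
    HasDerivAt (p t) (f' (0, 1)) θ :=
  (h.hasFDerivWithinAt (s := univ ×ˢ univ)).hasDerivAt_uncurry_right (mem_univ t)

theorem ContDiffOn.contDiff_uncurry_slice (hp : ContDiffOn ℝ n (uncurry p) (D ×ˢ univ))
    (ht : t ∈ D) : ContDiff ℝ n (p t) := by
  rw [← contDiffOn_univ]
  exact hp.comp (contDiff_const.prodMk contDiff_id).contDiffOn
    fun θ _ => mk_mem_prod ht (mem_univ θ)

theorem ContDiffOn.uncurry_deriv (hp : ContDiffOn ℝ n (uncurry p) (D ×ˢ univ))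
    (hD : UniqueDiffOn ℝ D) (hmn : m + 1 ≤ n) :
    ContDiffOn ℝ m (uncurry fun t => deriv (p t)) (D ×ˢ univ) := by
  have hS : UniqueDiffOn ℝ (D ×ˢ (univ : Set ℝ)) := hD.prod uniqueDiffOn_univ
  refine ((hp.fderivWithin hS hmn).clm_apply (contDiffOn_const (c := ((0, 1) : ℝ × ℝ)))).congr
    fun x hx => ?_
  have hdiff := hp.differentiableOn (zero_lt_one.trans_le (le_add_self.trans hmn)).ne' x hx
  exact (hdiff.hasFDerivWithinAt.hasDerivAt_uncurry_right hx.1).deriv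

theorem ContDiffOn.uncurry_derivWithin (hp : ContDiffOn ℝ n (uncurry p) (D ×ˢ univ))
    (hD : UniqueDiffOn ℝ D) (hmn : m + 1 ≤ n) :
    ContDiffOn ℝ m (uncurry fun t θ => derivWithin (p · θ) D t) (D ×ˢ univ) := by
  have hS : UniqueDiffOn ℝ (D ×ˢ (univ : Set ℝ)) := hD.prod uniqueDiffOn_univ
  refine ((hp.fderivWithin hS hmn).clm_apply (contDiffOn_const (c := ((1, 0) : ℝ × ℝ)))).congr
    fun x hx => ?_
  have hdiff := hp.differentiableOn (zero_lt_one.trans_le (le_add_self.trans hmn)).ne' x hx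
  exact (hdiff.hasFDerivWithinAt.hasDerivWithinAt_uncurry_left).derivWithin (hD _ hx.1)

/-- Schwarz's theorem `∂ₜ∂_θ p = ∂_θ∂ₜ p`. -/
theorem hasDerivAt_deriv_swap (hp : ContDiffAt ℝ 2 (uncurry p) (t, θ)) :
    HasDerivAt (fun s => deriv (p s) θ) (deriv (fun φ => deriv (p · φ) t) θ) t := by
  set f := uncurry p
  have hdiff : ∀ᶠ x in 𝓝 (t, θ), DifferentiableAt ℝ f x :=
    (hp.eventually (by simp)).mono fun x hx => hx.differentiableAt (by norm_num)
  have hf' : HasFDerivAt (fderiv ℝ f) (fderiv ℝ (fderiv ℝ f) (t, θ)) (t, θ) :=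
    ((hp.fderiv_right (m := 1) (by norm_num)).differentiableAt (by norm_num)).hasFDerivAt
  set f'' := fderiv ℝ (fderiv ℝ f) (t, θ)
  have happ (v : ℝ × ℝ) : HasFDerivAt (uncurry fun s φ => fderiv ℝ f (s, φ) v)
      ((ContinuousLinearMap.apply ℝ ℝ v).comp f'') (t, θ) :=
    (ContinuousLinearMap.apply ℝ ℝ v).hasFDerivAt.comp (t, θ) hf'
  have hleft : (fun s => deriv (p s) θ) =ᶠ[𝓝 t] fun s => fderiv ℝ f (s, θ) (0, 1) :=
    ((continuous_id.prodMk continuous_const).continuousAt.eventually hdiff).mono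
      fun s hs => hs.hasFDerivAt.hasDerivAt_uncurry_right.deriv
  have hright : (fun φ => deriv (p · φ) t) =ᶠ[𝓝 θ] fun φ => fderiv ℝ f (t, φ) (1, 0) :=
    ((continuous_const.prodMk continuous_id).continuousAt.eventually hdiff).mono
      fun φ hφ => hφ.hasFDerivAt.hasDerivAt_uncurry_left.deriv
  have hsymm : f'' (1, 0) (0, 1) = f'' (0, 1) (1, 0) :=
    hp.isSymmSndFDerivAt (by simp) _ _
  rw [hright.deriv_eq, (happ (1, 0)).hasDerivAt_uncurry_right.deriv]
  exact ((happ (0, 1)).hasDerivAt_uncurry_left.congr_of_eventuallyEq hleft).congr_deriv hsymm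

end Slices

section BoundaryDerivative

variable {f f' : ℝ → ℝ} {D : Set ℝ} {t b : ℝ}

theorem Convex.interior_mem_nhdsGT (hD : Convex ℝ D) (ht : t ∈ D) (hb : b ∈ D) (htb : t < b) :
    interior D ∈ 𝓝[>] t :=
  mem_of_superset (Ioo_mem_nhdsGT htb)
    (isOpen_Ioo.subset_interior_iff.2 (Ioo_subset_Icc_self.trans (hD.ordConnected.out ht hb)))

theorem Convex.interior_mem_nhdsLT (hD : Convex ℝ D) (ht : t ∈ D) (hb : b ∈ D) (hbt : b < t) :
    interior D ∈ 𝓝[<] t :=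
  mem_of_superset (Ioo_mem_nhdsLT hbt)
    (isOpen_Ioo.subset_interior_iff.2 (Ioo_subset_Icc_self.trans (hD.ordConnected.out hb ht)))

theorem Convex.hasDerivWithinAt_of_hasDerivAt_interior (hD : Convex ℝ D) (ht : t ∈ D)
    (hf : ContinuousWithinAt f D t) (hf' : ContinuousWithinAt f' D t)
    (h : ∀ x ∈ interior D, HasDerivAt f (f' x) x) : HasDerivWithinAt f (f' t) D t := by
  have hdiff : DifferentiableOn ℝ f (interior D) :=
    fun x hx => (h x hx).differentiableAt.differentiableWithinAt
  have hlim : Tendsto (deriv f) (𝓝[interior D] t) (𝓝 (f' t)) :=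
    (hf'.mono interior_subset).tendsto.congr'
      (eventually_nhdsWithin_of_forall fun x hx => (h x hx).deriv.symm)
  have hpoint : HasDerivWithinAt f (f' t) {t} t :=
    hasDerivWithinAt_iff_hasFDerivWithinAt.2 HasFDerivWithinAt.singleton
  have hright : HasDerivWithinAt f (f' t) (D ∩ Ici t) t := by
    by_cases hb : ∃ b ∈ D, t < b
    · obtain ⟨b, hb, htb⟩ := hb
      have hs := hD.interior_mem_nhdsGT ht hb htb
      exact (hasDerivWithinAt_Ici_of_tendsto_deriv hdiff (hf.mono interior_subset) hs
        (hlim.mono_left (nhdsWithin_le_of_mem hs))).mono inter_subset_right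
    · push Not at hb
      exact hpoint.mono fun x hx => le_antisymm (hb x hx.1) hx.2
  have hleft : HasDerivWithinAt f (f' t) (D ∩ Iic t) t := by
    by_cases hb : ∃ b ∈ D, b < t
    · obtain ⟨b, hb, hbt⟩ := hb
      have hs := hD.interior_mem_nhdsLT ht hb hbt
      exact (hasDerivWithinAt_Iic_of_tendsto_deriv hdiff (hf.mono interior_subset) hs
        (hlim.mono_left (nhdsWithin_le_of_mem hs))).mono inter_subset_right
    · push Not at hb
      exact hpoint.mono fun x hx => le_antisymm hx.2 (hb x hx.1)
  have hD_eq : D = (D ∩ Iic t) ∪ (D ∩ Ici t) := by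
    rw [← inter_union_distrib_left, Iic_union_Ici, inter_univ]
  rw [hD_eq]
  exact hleft.union hright

end BoundaryDerivative

section ParametricIntegral

variable {F G : ℝ → ℝ → ℝ} {U D : Set ℝ} {a b t : ℝ}

theorem continuousOn_intervalIntegral_of_continuousOn_uncurry
    (hF : ContinuousOn (uncurry F) (D ×ˢ univ)) :
    ContinuousOn (fun s => ∫ θ in a..b, F s θ) D := by
  rw [continuousOn_iff_continuous_domRestrict]
  refine intervalIntegral.continuous_parametric_intervalIntegral_of_continuous'
    (f := fun (s : D) θ => F s θ) ?_ a b
  exact hF.comp_continuous (continuous_subtype_val.prodMap continuous_id)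
    fun x => mk_mem_prod x.1.2 (mem_univ x.2)

theorem hasDerivAt_intervalIntegral_of_continuousOn_uncurry (hU : IsOpen U)
    (hF : ContinuousOn (uncurry F) (U ×ˢ univ)) (hG : ContinuousOn (uncurry G) (U ×ˢ univ))
    (hFG : ∀ s ∈ U, ∀ θ, HasDerivAt (F · θ) (G s θ) s) (ht : t ∈ U) :
    HasDerivAt (fun s => ∫ θ in a..b, F s θ) (∫ θ in a..b, G t θ) t := by
  obtain ⟨ε, hε, hball⟩ := Metric.nhds_basis_closedBall.mem_iff.1 (hU.mem_nhds ht)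
  obtain ⟨C, hC⟩ := ((isCompact_closedBall t ε).prod isCompact_uIcc)
    |>.exists_bound_of_continuousOn (hG.mono (prod_mono hball (subset_univ _)))
  have hslice {H : ℝ → ℝ → ℝ} (hH : ContinuousOn (uncurry H) (U ×ˢ univ)) {s : ℝ}
      (hs : s ∈ U) : Continuous (H s) := by
    rw [← continuousOn_univ]
    exact hH.comp (continuous_const.prodMk continuous_id).continuousOn
      fun θ _ => mk_mem_prod hs (mem_univ θ)
  refine (intervalIntegral.hasDerivAt_integral_of_dominated_loc_of_deriv_le (bound := fun _ => C)
    (Metric.ball_mem_nhds t hε) ?_ ((hslice hF ht).intervalIntegrable _ _)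
    (hslice hG ht).aestronglyMeasurable ?_ intervalIntegrable_const ?_).2
  · filter_upwards [hU.mem_nhds ht] with s hs using (hslice hF hs).aestronglyMeasurable
  · refine ae_of_all _ fun θ hθ s hs => hC (s, θ) ⟨Metric.ball_subset_closedBall hs, ?_⟩
    exact uIoc_subset_uIcc hθ
  · exact ae_of_all _ fun θ _ s hs => hFG s (hball (Metric.ball_subset_closedBall hs)) θ

theorem Convex.hasDerivWithinAt_intervalIntegral (hD : Convex ℝ D)
    (hF : ContinuousOn (uncurry F) (D ×ˢ univ)) (hG : ContinuousOn (uncurry G) (D ×ˢ univ))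
    (hFG : ∀ s ∈ interior D, ∀ θ, HasDerivAt (F · θ) (G s θ) s) (ht : t ∈ D) :
    HasDerivWithinAt (fun s => ∫ θ in a..b, F s θ) (∫ θ in a..b, G t θ) D t := by
  have hint : interior D ×ˢ univ ⊆ D ×ˢ (univ : Set ℝ) :=
    prod_mono interior_subset subset_rfl
  exact hD.hasDerivWithinAt_of_hasDerivAt_interior ht
    (continuousOn_intervalIntegral_of_continuousOn_uncurry hF t ht)
    (continuousOn_intervalIntegral_of_continuousOn_uncurry hG t ht)
    fun s hs => hasDerivAt_intervalIntegral_of_continuousOn_uncurry isOpen_interior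
      (hF.mono hint) (hG.mono hint) hFG hs

end ParametricIntegral

section TimeDomain

variable {T : ℝ≥0∞}

theorem convex_timeDom (T : ℝ≥0∞) : Convex ℝ (timeDom T) :=
  Set.OrdConnected.convex ⟨fun _ hx _ hy _ hz =>
    ⟨hx.1.trans hz.1, (ENNReal.ofReal_le_ofReal hz.2).trans_lt hy.2⟩⟩

theorem zero_mem_timeDom (hT : 0 < T) : 0 ∈ timeDom T :=
  ⟨le_rfl, by rwa [ENNReal.ofReal_zero]⟩

theorem uniqueDiffOn_timeDom (hT : 0 < T) : UniqueDiffOn ℝ (timeDom T) := by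
  obtain ⟨r, -, hr0, hrT⟩ := ENNReal.lt_iff_exists_real_btwn.1 hT
  have hr : 0 < r := ENNReal.ofReal_pos.1 hr0
  have hIoo : Ioo 0 r ⊆ timeDom T := fun x hx =>
    ⟨hx.1.le, (ENNReal.ofReal_le_ofReal hx.2.le).trans_lt hrT⟩
  exact uniqueDiffOn_convex (convex_timeDom T)
    ⟨r / 2, isOpen_Ioo.subset_interior_iff.2 hIoo ⟨half_pos hr, half_lt_self hr⟩⟩

end TimeDomain

structure IsFlowSolution (D : Set ℝ) (p : ℝ → ℝ → ℝ) : Prop where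
  contDiffOn : ContDiffOn ℝ (⊤ : ℕ∞) (uncurry p) (D ×ˢ univ)
  periodic : ∀ t ∈ D, Periodic (p t) (2 * π)
  derivWithin_eq : ∀ t ∈ D, ∀ θ, derivWithin (p · θ) D t = flowSpeed (p t) θ

namespace IsFlowSolution

variable {D : Set ℝ} {p : ℝ → ℝ → ℝ} {t : ℝ}

theorem contDiff (h : IsFlowSolution D p) (ht : t ∈ D) : ContDiff ℝ (⊤ : ℕ∞) (p t) :=
  h.contDiffOn.contDiff_uncurry_slice ht

theorem contDiffOn_flowSpeed (h : IsFlowSolution D p) (hD : UniqueDiffOn ℝ D) :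
    ContDiffOn ℝ (⊤ : ℕ∞) (uncurry fun t => flowSpeed (p t)) (D ×ˢ univ) :=
  (h.contDiffOn.uncurry_derivWithin hD (le_of_eq rfl)).congr
    fun x hx => (h.derivWithin_eq x.1 hx.1 x.2).symm

theorem hasDerivAt (h : IsFlowSolution D p) (ht : t ∈ interior D) (θ : ℝ) :
    HasDerivAt (p · θ) (flowSpeed (p t) θ) t := by
  have htD := interior_subset ht
  have hdiff := (h.contDiffOn.differentiableOn (by simp) (t, θ) (mk_mem_prod htD (mem_univ θ)))
    |>.hasFDerivWithinAt.hasDerivWithinAt_uncurry_left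
  rw [← h.derivWithin_eq t htD θ]
  exact hdiff.differentiableWithinAt.hasDerivWithinAt.hasDerivAt (mem_interior_iff_mem_nhds.1 ht)

theorem hasDerivAt_deriv (h : IsFlowSolution D p) (ht : t ∈ interior D) (θ : ℝ) :
    HasDerivAt (fun s => deriv (p s) θ) (deriv (flowSpeed (p t)) θ) t := by
  have hS : D ×ˢ univ ∈ 𝓝 (t, θ) := prod_mem_nhds (mem_interior_iff_mem_nhds.1 ht) univ_mem
  have hswap := hasDerivAt_deriv_swap
    ((h.contDiffOn.contDiffAt hS).of_le (WithTop.coe_le_coe.2 le_top))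
  rwa [funext fun φ => (h.hasDerivAt ht φ).deriv] at hswap

theorem hasDerivWithinAt_algLen (h : IsFlowSolution D p) (hD : Convex ℝ D)
    (hD' : UniqueDiffOn ℝ D) (ht : t ∈ D) :
    HasDerivWithinAt (fun s => algLen (p s)) 0 D t := by
  have hL := hD.hasDerivWithinAt_intervalIntegral (a := 0) (b := 2 * π) h.contDiffOn.continuousOn
    (h.contDiffOn_flowSpeed hD').continuousOn (fun s hs θ => h.hasDerivAt hs θ) ht
  rwa [integral_flowSpeed (contDiff_infty.1 (h.contDiff ht) 2) (h.periodic t ht)] at hL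

theorem hasDerivWithinAt_algArea (h : IsFlowSolution D p) (hD : Convex ℝ D)
    (hD' : UniqueDiffOn ℝ D) (ht : t ∈ D) :
    HasDerivWithinAt (fun s => algArea (p s))
      ((∫ θ in 0..2 * π, betaF (p t) θ ^ 2) - algLen (p t) ^ 2 / (2 * π)) D t := by
  have hp' := h.contDiffOn.uncurry_deriv hD' (m := (⊤ : ℕ∞)) (le_of_eq rfl)
  have hv' := (h.contDiffOn_flowSpeed hD').uncurry_deriv hD' (m := (⊤ : ℕ∞)) (le_of_eq rfl)
  have hp := h.contDiffOn.continuousOn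
  have hv := (h.contDiffOn_flowSpeed hD').continuousOn
  have hF := hD.hasDerivWithinAt_intervalIntegral (a := 0) (b := 2 * π)
    (F := fun s θ => p s θ ^ 2 - deriv (p s) θ ^ 2)
    (G := fun s θ =>
      2 * (p s θ * flowSpeed (p s) θ - deriv (p s) θ * deriv (flowSpeed (p s)) θ))
    ((hp.fun_pow 2).fun_sub (hp'.continuousOn.fun_pow 2))
    (continuousOn_const.fun_mul
      ((hp.fun_mul hv).fun_sub (hp'.continuousOn.fun_mul hv'.continuousOn)))
    (fun s hs θ => (((h.hasDerivAt hs θ).fun_pow 2).sub ((h.hasDerivAt_deriv hs θ).fun_pow 2))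
      |>.congr_deriv (by norm_num; ring)) ht
  have hA := hF.const_mul (1 / 2)
  rw [intervalIntegral.integral_const_mul, ← mul_assoc, one_div_mul_cancel two_ne_zero, one_mul,
    integral_mul_flowSpeed_sub_deriv_mul_deriv (contDiff_infty.1 (h.contDiff ht) 3)
      (h.periodic t ht)] at hA
  exact hA.congr_of_mem (fun s hs => algArea_eq_integral_sq_sub_sq_deriv
    (contDiff_infty.1 (h.contDiff hs) 2) (h.periodic s hs)) ht

end IsFlowSolution

theorem length_const_area_increasing
    (T : ℝ≥0∞) (hT : 0 < T) (p : ℝ → ℝ → ℝ)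
    (hp : ContDiffOn ℝ (⊤ : ℕ∞) (Function.uncurry p) (timeDom T ×ˢ (Set.univ : Set ℝ)))
    (hper : ∀ t ∈ timeDom T, Function.Periodic (p t) (2 * π))
    (hpde : ∀ t ∈ timeDom T, ∀ θ : ℝ,
      derivWithin (fun s => p s θ) (timeDom T) t
        = iteratedDeriv 2 (p t) θ + p t θ - algLen (p t) / (2 * π)) :
    (∀ t ∈ timeDom T, algLen (p t) = algLen (p 0)) ∧
    (∀ s ∈ timeDom T, ∀ t ∈ timeDom T, s ≤ t → algArea (p s) ≤ algArea (p t)) ∧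
    (∀ t ∈ timeDom T,
      HasDerivWithinAt (fun s => algArea (p s))
        ((∫ θ in (0:ℝ)..(2 * π), (betaF (p t) θ) ^ 2) - (algLen (p t)) ^ 2 / (2 * π))
        (timeDom T) t ∧
      0 ≤ (∫ θ in (0:ℝ)..(2 * π), (betaF (p t) θ) ^ 2) - (algLen (p t)) ^ 2 / (2 * π)) := by
  have hD := convex_timeDom T
  have hD' := uniqueDiffOn_timeDom hT
  have h : IsFlowSolution (timeDom T) p :=
    ⟨hp, hper, fun t ht θ => by rw [hpde t ht θ, flowSpeed, betaF, add_comm (p t θ)]⟩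
  have hA (t : ℝ) (ht : t ∈ timeDom T) := h.hasDerivWithinAt_algArea hD hD' ht
  have hA_nonneg (t : ℝ) (ht : t ∈ timeDom T) :
      0 ≤ (∫ θ in 0..2 * π, betaF (p t) θ ^ 2) - algLen (p t) ^ 2 / (2 * π) :=
    sub_nonneg.2 (sq_algLen_div_le_integral_sq_betaF (contDiff_infty.1 (h.contDiff ht) 2)
      (h.periodic t ht))
  refine ⟨fun t ht => ?_, ?_, fun t ht => ⟨hA t ht, hA_nonneg t ht⟩⟩
  · have hL := hD.norm_image_sub_le_of_norm_hasDerivWithin_le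
      (fun s hs => h.hasDerivWithinAt_algLen hD hD' hs) (fun _ _ => norm_zero.le)
      (zero_mem_timeDom hT) ht
    rwa [zero_mul, norm_le_zero_iff, sub_eq_zero] at hL
  · exact monotoneOn_of_hasDerivWithinAt_nonneg hD (fun t ht => (hA t ht).continuousWithinAt)
      (fun t ht => (hA t (interior_subset ht)).mono interior_subset)
      (fun t ht => hA_nonneg t (interior_subset ht))
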